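/- If f is μ_f-strongly convex, S is a random matrix with E[S] = I and μ_D = λ_min(E[SᵀS]), then f̃(x) = E[f(s + S(x−s))] is μ_D μ_f-strongly convex: f̃(x+h) ≥ f̃(x) + ⟨∇f̃(x), h⟩ + (μ_D μ_f/2)‖h‖². -/

import Mathlib

open MeasureTheory Matrix
open scoped RealInnerProductSpace

/-!
Strong convexity of `f` at the point `s + S (x - s)` in the direction `S h` gives, for every
sample of `S`, a lower bound on `f (s + S (x + h - s))` whose linear term is `⟪Sᵀ ∇f, h⟫` and
whose quadratic term is `μ_f / 2 * ‖S h‖²`. Integrating over `S` turns the quadratic term into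
`μ_f / 2 * E[‖S h‖²] ≥ μ_D μ_f / 2 * ‖h‖²`.
-/

theorem Matrix.inner_toEuclideanLin_transpose {m n : Type*} [Fintype m] [Fintype n]
    [DecidableEq m] [DecidableEq n] (A : Matrix m n ℝ) (u : EuclideanSpace ℝ m)
    (v : EuclideanSpace ℝ n) :
    ⟪toEuclideanLin Aᵀ u, v⟫ = ⟪u, toEuclideanLin A v⟫ := by
  rw [← conjTranspose_eq_transpose_of_trivial, toEuclideanLin_conjTranspose_eq_adjoint,
    LinearMap.adjoint_inner_left]

theorem le_apply_add_toEuclideanLin_of_strongConvex {m n : Type*} [Fintype m] [Fintype n]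
    [DecidableEq m] [DecidableEq n] {f : EuclideanSpace ℝ m → ℝ}
    {g : EuclideanSpace ℝ m → EuclideanSpace ℝ m} {μf : ℝ}
    (hconv : ∀ x h : EuclideanSpace ℝ m, f (x + h) ≥ f x + ⟪g x, h⟫ + μf / 2 * ‖h‖ ^ 2)
    (A : Matrix m n ℝ) (y : EuclideanSpace ℝ m) (h : EuclideanSpace ℝ n) :
    f y + ⟪toEuclideanLin Aᵀ (g y), h⟫ + μf / 2 * ‖toEuclideanLin A h‖ ^ 2
      ≤ f (y + toEuclideanLin A h) := by
  rw [inner_toEuclideanLin_transpose]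
  exact hconv y _

theorem integral_add_inner_integral_add_integral_le {Ω E : Type*} [MeasurableSpace Ω]
    {μ : Measure Ω} [NormedAddCommGroup E] [InnerProductSpace ℝ E] [CompleteSpace E]
    {φ ψ Q : Ω → ℝ} {G : Ω → E} (h : E) (hφ : Integrable φ μ) (hψ : Integrable ψ μ)
    (hG : Integrable G μ) (hQ : Integrable Q μ)
    (hle : ∀ ω, φ ω + ⟪G ω, h⟫ + Q ω ≤ ψ ω) :
    (∫ ω, φ ω ∂μ) + ⟪∫ ω, G ω ∂μ, h⟫ + ∫ ω, Q ω ∂μ ≤ ∫ ω, ψ ω ∂μ := by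
  have hGh : Integrable (fun ω => ⟪G ω, h⟫) μ := hG.inner_const h
  have hφG : Integrable (fun ω => φ ω + ⟪G ω, h⟫) μ := hφ.add hGh
  have hinner : ∫ ω, ⟪G ω, h⟫ ∂μ = ⟪∫ ω, G ω ∂μ, h⟫ := by
    simpa only [real_inner_comm _ h] using integral_inner (𝕜 := ℝ) hG h
  calc (∫ ω, φ ω ∂μ) + ⟪∫ ω, G ω ∂μ, h⟫ + ∫ ω, Q ω ∂μ
      = ∫ ω, (φ ω + ⟪G ω, h⟫ + Q ω) ∂μ := by
        rw [integral_add hφG hQ, integral_add hφ hGh, hinner]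
    _ ≤ ∫ ω, ψ ω ∂μ := integral_mono (hφG.add hQ) hψ hle

theorem mast_tilde_strongly_convex_general {d : ℕ} {Ω : Type*} [MeasurableSpace Ω]
    (μ : Measure Ω)
    (f : EuclideanSpace ℝ (Fin d) → ℝ)
    (g : EuclideanSpace ℝ (Fin d) → EuclideanSpace ℝ (Fin d))
    (μf μD : ℝ) (hμf : 0 < μf)
    (hconv : ∀ x h : EuclideanSpace ℝ (Fin d),
      f (x + h) ≥ f x + ⟪g x, h⟫ + μf / 2 * ‖h‖ ^ 2)
    (S : Ω → Matrix (Fin d) (Fin d) ℝ)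
    (hSS_int : ∀ v : EuclideanSpace ℝ (Fin d),
      Integrable (fun ω => ‖Matrix.toEuclideanLin (S ω) v‖ ^ 2) μ)
    (hμD : ∀ v : EuclideanSpace ℝ (Fin d),
      μD * ‖v‖ ^ 2 ≤ ∫ ω, ‖Matrix.toEuclideanLin (S ω) v‖ ^ 2 ∂μ)
    (s : EuclideanSpace ℝ (Fin d))
    (hf_int : ∀ x : EuclideanSpace ℝ (Fin d),
      Integrable (fun ω => f (s + Matrix.toEuclideanLin (S ω) (x - s))) μ)
    (hg_int : ∀ x : EuclideanSpace ℝ (Fin d),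
      Integrable (fun ω =>
        Matrix.toEuclideanLin (S ω)ᵀ (g (s + Matrix.toEuclideanLin (S ω) (x - s)))) μ) :
    ∀ x h : EuclideanSpace ℝ (Fin d),
      (∫ ω, f (s + Matrix.toEuclideanLin (S ω) (x + h - s)) ∂μ) ≥
        (∫ ω, f (s + Matrix.toEuclideanLin (S ω) (x - s)) ∂μ)
        + ⟪∫ ω, Matrix.toEuclideanLin (S ω)ᵀ
            (g (s + Matrix.toEuclideanLin (S ω) (x - s))) ∂μ, h⟫
        + μD * μf / 2 * ‖h‖ ^ 2 := by
  intro x h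
  have hshift : ∀ ω, s + toEuclideanLin (S ω) (x + h - s)
      = (s + toEuclideanLin (S ω) (x - s)) + toEuclideanLin (S ω) h := fun ω => by
    rw [add_sub_right_comm, map_add, add_assoc]
  have hsample := integral_add_inner_integral_add_integral_le h (hf_int x) (hf_int (x + h))
    (hg_int x) ((hSS_int h).const_mul (μf / 2)) fun ω => by
      rw [hshift]
      exact le_apply_add_toEuclideanLin_of_strongConvex hconv (S ω) _ h
  rw [integral_const_mul] at hsample
  have hquad := mul_le_mul_of_nonneg_left (hμD h) (half_pos hμf).le
  linarith

/-- If `f` is `μ_f`-strongly convex (with gradient `g`), `S` is a random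
matrix with `E[S] = I` and `λ_min(E[SᵀS]) ≥ μ_D` (quadratic-form encoding
`μ_D ‖v‖² ≤ E[‖S v‖²]`), then `f̃(x) = E[f(s + S(x-s))]` is `μ_D μ_f`-strongly
convex, with `∇f̃(x) = E[Sᵀ ∇f(s + S(x-s))]`. -/
theorem mast_tilde_strongly_convex {d : ℕ} {Ω : Type*} [MeasurableSpace Ω]
    (μ : Measure Ω) [IsProbabilityMeasure μ]
    (f : EuclideanSpace ℝ (Fin d) → ℝ)
    (g : EuclideanSpace ℝ (Fin d) → EuclideanSpace ℝ (Fin d))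
    (μf μD : ℝ) (hμf : 0 < μf)
    (hconv : ∀ x h : EuclideanSpace ℝ (Fin d),
      f (x + h) ≥ f x + ⟪g x, h⟫ + μf / 2 * ‖h‖ ^ 2)
    (S : Ω → Matrix (Fin d) (Fin d) ℝ)
    (hS_int : ∀ i j, Integrable (fun ω => S ω i j) μ)
    (hS_mean : ∀ i j, (∫ ω, S ω i j ∂μ) = (1 : Matrix (Fin d) (Fin d) ℝ) i j)
    (hSS_int : ∀ v : EuclideanSpace ℝ (Fin d),
      Integrable (fun ω => ‖Matrix.toEuclideanLin (S ω) v‖ ^ 2) μ)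
    (hμD : ∀ v : EuclideanSpace ℝ (Fin d),
      μD * ‖v‖ ^ 2 ≤ ∫ ω, ‖Matrix.toEuclideanLin (S ω) v‖ ^ 2 ∂μ)
    (s : EuclideanSpace ℝ (Fin d))
    (hf_int : ∀ x : EuclideanSpace ℝ (Fin d),
      Integrable (fun ω => f (s + Matrix.toEuclideanLin (S ω) (x - s))) μ)
    (hg_int : ∀ x : EuclideanSpace ℝ (Fin d),
      Integrable (fun ω =>
        Matrix.toEuclideanLin (S ω)ᵀ (g (s + Matrix.toEuclideanLin (S ω) (x - s)))) μ) :
    ∀ x h : EuclideanSpace ℝ (Fin d),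
      (∫ ω, f (s + Matrix.toEuclideanLin (S ω) (x + h - s)) ∂μ) ≥
        (∫ ω, f (s + Matrix.toEuclideanLin (S ω) (x - s)) ∂μ)
        + ⟪∫ ω, Matrix.toEuclideanLin (S ω)ᵀ
            (g (s + Matrix.toEuclideanLin (S ω) (x - s))) ∂μ, h⟫
        + μD * μf / 2 * ‖h‖ ^ 2 :=
  mast_tilde_strongly_convex_general μ f g μf μD hμf hconv S hSS_int hμD s hf_int hg_int
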